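/- Let r ∈ ℕ with r ≥ 1, set b := 1/(2r) and n := r + 1, and define positions x_j := (j−1)/(n−1) for j = 1,…,n. Let μ := Σ_{j=1}^{n} (1/n)·δ_{x_j}. Then the output density p_Y(y; μ) := r·μ([y−b, y+b] ∩ [0,1]) satisfies p_Y(y; μ) = (n−1)/n for all but finitely many y ∈ (−b, 1+b); i.e., the output distribution is uniform on [−b, 1+b]. -/

import Mathlib

open MeasureTheory Set

/-- Output density of the additive uniform noise channel with inverse noise width `r`,
noise half-width `b`, and input distribution `μ` supported on `[0,1]`:
`p_Y(y; μ) = r · μ([y−b, y+b] ∩ [0,1])`. -/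
noncomputable def outDen (r b : ℝ) (μ : Measure ℝ) (y : ℝ) : ℝ :=
  r * (μ (Icc (y - b) (y + b) ∩ Icc 0 1)).toReal

set_option maxHeartbeats 2000000

/-- Integer case `r ∈ ℕ`, `b = 1/(2r)`, `n = r+1`, positions
`x_j = (j−1)/(n−1)` with equal masses `1/n`: the output density equals `(n−1)/n`
for all but finitely many `y ∈ (−b, 1+b)`, i.e. the output is uniform on `[−b,1+b]`. -/
theorem stmt2 (r : ℕ) (hr : 1 ≤ r) (b : ℝ) (hb : b = 1 / (2 * (r : ℝ)))
    (n : ℕ) (hn : n = r + 1)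
    (x : ℕ → ℝ) (hx : ∀ j, x j = ((j : ℝ) - 1) / ((n : ℝ) - 1))
    (μ : Measure ℝ)
    (hμ : μ = ∑ j ∈ Finset.Icc 1 n, ENNReal.ofReal (1 / (n : ℝ)) • Measure.dirac (x j)) :
    ∃ F : Set ℝ, F.Finite ∧ ∀ y ∈ Ioo (-b) (1 + b) \ F,
      outDen (r : ℝ) b μ y = ((n : ℝ) - 1) / (n : ℝ) := by
  have hc : (1:ℝ) ≤ (r:ℝ) := by exact_mod_cast hr
  have hc0 : (0:ℝ) < (r:ℝ) := lt_of_lt_of_le one_pos hc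
  have hb0 : 0 < b := by rw [hb]; positivity
  have hnr : ((n:ℝ) - 1) = (r:ℝ) := by rw [hn]; push_cast; ring
  have hxj : ∀ j : ℕ, x j = ((j:ℝ) - 1) / (r:ℝ) := by
    intro j; rw [hx j, hnr]
  have hbr : b * (r:ℝ) = 1/2 := by rw [hb]; field_simp
  refine ⟨⋃ j ∈ Finset.Icc 1 n, ({x j - b, x j + b} : Set ℝ), ?_, ?_⟩
  · exact (Finset.Icc 1 n).finite_toSet.biUnion fun j _ => (Set.toFinite _)
  intro y hy
  obtain ⟨hy1, hyF⟩ := hy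
  obtain ⟨hyl, hyu⟩ := hy1
  have hne : ∀ j ∈ Finset.Icc 1 n, y ≠ x j - b ∧ y ≠ x j + b := by
    intro j hj
    constructor <;> intro h <;> exact hyF (Set.mem_biUnion hj (by simp [h]))
  set k : ℤ := round ((r:ℝ) * y) with hkdef
  have hk2 : |(r:ℝ) * y - (k:ℝ)| ≤ 1/2 := by
    rw [hkdef]; exact abs_sub_round ((r:ℝ) * y)
  clear_value k
  have hcyl : -(1/2) < (r:ℝ) * y := by
    have := mul_lt_mul_of_pos_left hyl hc0
    nlinarith [hbr]
  have hcyu : (r:ℝ) * y < (r:ℝ) + 1/2 := by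
    have := mul_lt_mul_of_pos_left hyu hc0
    nlinarith [hbr]
  -- strictness
  have hkstrict : |(r:ℝ) * y - (k:ℝ)| < 1/2 := by
    rcases lt_or_eq_of_le hk2 with h | h
    · exact h
    · exfalso
      rcases (abs_eq (by norm_num : (0:ℝ) ≤ 1/2)).mp h with h' | h'
      · -- r*y = k + 1/2, y = x (k.toNat + 2) - b
        have hk0 : 0 ≤ k := by
          have h1 : (-1:ℝ) < (k:ℝ) := by linarith
          have h2 : (-1:ℤ) < k := by exact_mod_cast h1
          omega
        have hkr : k + 2 ≤ (r:ℤ) + 1 := by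
          have h1 : (k:ℝ) < (r:ℝ) := by linarith
          have h2 : k < (r:ℤ) := by exact_mod_cast h1
          omega
        have hj : k.toNat + 2 ∈ Finset.Icc 1 n := by
          simp only [Finset.mem_Icc, hn]; omega
        refine (hne _ hj).1 ?_
        rw [hxj]
        have hkc0 : ((k.toNat : ℕ) : ℝ) = (k:ℝ) := by
          exact_mod_cast Int.toNat_of_nonneg hk0
        have hkc : ((k.toNat + 2 : ℕ) : ℝ) = (k:ℝ) + 2 := by
          push_cast [hkc0]; ring
        rw [hkc, hb]
        field_simp
        nlinarith [h']
      · -- r*y = k - 1/2, y = x k.toNat + b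
        have hk1 : 1 ≤ k := by
          have h1 : (0:ℝ) < (k:ℝ) := by linarith
          exact_mod_cast h1
        have hkr : k ≤ (r:ℤ) + 1 := by
          have h1 : (k:ℝ) < (r:ℝ) + 1 := by linarith
          have h2 : k < (r:ℤ) + 1 := by exact_mod_cast h1
          omega
        have hj : k.toNat ∈ Finset.Icc 1 n := by
          simp only [Finset.mem_Icc, hn]; omega
        refine (hne _ hj).2 ?_
        rw [hxj]
        have hkc : ((k.toNat : ℕ) : ℝ) = (k:ℝ) := by
          exact_mod_cast Int.toNat_of_nonneg (by omega : 0 ≤ k)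
        rw [hkc, hb]
        field_simp
        nlinarith [h']
  have hk0 : 0 ≤ k := by
    have h1 : (-1:ℝ) < (k:ℝ) := by
      have := abs_lt.mp hkstrict
      linarith [this.1]
    have h2 : (-1:ℤ) < k := by exact_mod_cast h1
    omega
  have hkr : k ≤ (r:ℤ) := by
    have h1 : (k:ℝ) < (r:ℝ) + 1 := by
      have := abs_lt.mp hkstrict
      linarith [this.2]
    have h2 : k < (r:ℤ) + 1 := by exact_mod_cast h1
    omega
  set j0 : ℕ := k.toNat + 1 with hj0def
  have hkc0 : ((k.toNat : ℕ) : ℝ) = (k:ℝ) := by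
    exact_mod_cast Int.toNat_of_nonneg hk0
  have hj0c : ((j0:ℝ) - 1) = (k:ℝ) := by
    rw [hj0def]; push_cast [hkc0]; ring
  have hj0mem : j0 ∈ Finset.Icc 1 n := by
    simp only [Finset.mem_Icc, hj0def, hn]; omega
  clear_value j0
  set S : Set ℝ := Icc (y - b) (y + b) ∩ Icc 0 1 with hSdef
  have hSmeas : MeasurableSet S := measurableSet_Icc.inter measurableSet_Icc
  -- membership characterization
  have hmem : ∀ j ∈ Finset.Icc 1 n, (x j ∈ S ↔ j = j0) := by
    intro j hj
    obtain ⟨hj1, hjn⟩ := Finset.mem_Icc.mp hj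
    constructor
    · rintro ⟨⟨hl, hu⟩, -⟩
      have hl' : y - b < x j := lt_of_le_of_ne hl (by
        intro h; exact (hne j hj).2 (by linarith [h]))
      have hu' : x j < y + b := lt_of_le_of_ne hu (by
        intro h; exact (hne j hj).1 (by linarith [h]))
      rw [hxj] at hl' hu'
      have e : (r:ℝ) * (((j:ℝ)-1)/(r:ℝ)) = (j:ℝ)-1 := by field_simp
      have hbr' : (r:ℝ) * b = 1/2 := by rw [mul_comm]; exact hbr
      have hA := mul_lt_mul_of_pos_left hl' hc0
      have hB := mul_lt_mul_of_pos_left hu' hc0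
      rw [e, mul_sub] at hA
      rw [e, mul_add] at hB
      have h1 : |((j:ℝ) - 1) - (r:ℝ) * y| < 1/2 := by
        rw [abs_lt]; constructor <;> linarith
      have h2 : |((j:ℝ) - 1) - (k:ℝ)| < 1 := by
        calc |((j:ℝ) - 1) - (k:ℝ)| ≤ |((j:ℝ)-1) - (r:ℝ)*y| + |(r:ℝ)*y - (k:ℝ)| :=
              abs_sub_le ((j:ℝ)-1) ((r:ℝ)*y) (k:ℝ)
          _ < 1 := by linarith
      have h3 : ((j:ℤ) - 1) = k := by
        have h5 : |(((j:ℤ) - 1 - k : ℤ) : ℝ)| < 1 := by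
          push_cast; convert h2 using 2
        have h4 : |((j:ℤ) - 1 - k)| < 1 := by exact_mod_cast h5
        rw [abs_lt] at h4
        omega
      omega
    · rintro rfl
      have hka := abs_lt.mp hkstrict
      have hxv : x j = (k:ℝ) / (r:ℝ) := by rw [hxj, hj0c]
      have habs1 : y - b < x j := by
        rw [hxv, lt_div_iff₀ hc0]
        have : (y - b) * (r:ℝ) = y * (r:ℝ) - b * (r:ℝ) := by ring
        rw [this, hbr]
        have : (r:ℝ) * y - (k:ℝ) < 1/2 := hka.2
        linarith [this]
      have habs2 : x j < y + b := by
        rw [hxv, div_lt_iff₀ hc0]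
        have : (y + b) * (r:ℝ) = y * (r:ℝ) + b * (r:ℝ) := by ring
        rw [this, hbr]
        have : -(1/2) < (r:ℝ) * y - (k:ℝ) := hka.1
        linarith [this]
      have hx01 : x j ∈ Icc (0:ℝ) 1 := by
        rw [hxv]
        constructor
        · apply div_nonneg _ (le_of_lt hc0)
          exact_mod_cast hk0
        · rw [div_le_one hc0]
          exact_mod_cast hkr
      exact ⟨⟨le_of_lt habs1, le_of_lt habs2⟩, hx01⟩
  -- compute the measure
  have hμS : μ S = ENNReal.ofReal (1 / (n:ℝ)) := by
    rw [hμ]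
    rw [Measure.finset_sum_apply]
    rw [Finset.sum_eq_single_of_mem j0 hj0mem]
    · rw [Measure.smul_apply, Measure.dirac_apply' _ hSmeas,
        Set.indicator_of_mem ((hmem j0 hj0mem).mpr rfl)]
      simp
    · intro j hj hjne
      rw [Measure.smul_apply, Measure.dirac_apply' _ hSmeas,
        Set.indicator_of_notMem (fun h => hjne ((hmem j hj).mp h))]
      simp
  have hn0 : (0:ℝ) < (n:ℝ) := by
    rw [hn]; push_cast; linarith
  rw [outDen, ← hSdef, hμS, ENNReal.toReal_ofReal (by positivity)]
  rw [hnr]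
  field_simp
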